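/- Let ω = e^{2πi/3} ∈ ℂ, n ≥ 0 an integer, and A ⊆ {1,ω,ω²}^n trifferent. Let P be a set of ordered pairs of distinct elements of A containing exactly one of (x,y) and (y,x) for each unordered pair {x,y} of distinct elements of A. Then the family of functions ((z,t) ↦ f_{x,y}(z,t))_{(x,y)∈P}, viewed as elements of the ℂ-vector space of functions from {(z,t) ∈ A × A : z ≠ t} to ℂ, is linearly independent over ℂ. -/

import Mathlib

open scoped BigOperators
open Classical

noncomputable section

namespace SlicePaper

/-- Shannon entropy of the `i`-th coordinate marginal of a distribution `p` on `Δ`. -/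
def margEnt {ι : Type*} [Fintype ι] (Δ : Finset (ι → ℤ)) (p : (ι → ℤ) → ℝ) (i : ι) : ℝ :=
  -∑ α ∈ Δ.image (fun γ => γ i),
      (∑ γ ∈ Δ.filter (fun γ => γ i = α), p γ) *
        Real.log (∑ γ ∈ Δ.filter (fun γ => γ i = α), p γ)

/-- The entropy `H(Δ)` of a finite set of integer tuples. -/
def HSet {ι : Type*} [Fintype ι] (Δ : Finset (ι → ℤ)) : ℝ :=
  sSup {e : ℝ | ∃ p : (ι → ℤ) → ℝ, (∀ γ, 0 ≤ p γ) ∧ (∀ γ, p γ ≠ 0 → γ ∈ Δ) ∧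
    (∑ γ ∈ Δ, p γ) = 1 ∧ e = ⨅ i, margEnt Δ p i}

/-- Maximal elements of `Δ` w.r.t. the product of the linear orders `σ i`. -/
def maxElems {ι : Type*} [Fintype ι] (σ : ι → LinearOrder ℤ) (Δ : Finset (ι → ℤ)) :
    Finset (ι → ℤ) :=
  Δ.filter (fun γ => ∀ δ ∈ Δ, (∀ i, (σ i).le (γ i) (δ i)) → γ = δ)

/-- `ξ k = log (k / (k-1)^((k-1)/k))`. -/
def xi (k : ℕ) : ℝ :=
  Real.log ((k : ℝ) / ((k : ℝ) - 1) ^ (((k : ℝ) - 1) / (k : ℝ)))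

/-- Slice rank of a coefficient array `c`. -/
def sliceRank {k : ℕ} (F : Type*) [Field F] (τ : Fin k → Type*) [∀ i, Fintype (τ i)]
    (c : (∀ i, τ i) → F) : ℕ :=
  sInf {r : ℕ | ∃ j : Fin r → Fin k, ∃ a : ∀ l : Fin r, τ (j l) → F,
    ∃ b : ∀ l : Fin r, (((i : {i : Fin k // i ≠ j l}) → τ i.1) → F),
    ∀ s : ∀ i, τ i, c s = ∑ l : Fin r, a l (s (j l)) * b l (fun i => s i.1)}

/-- `n`-th tensor power of a coefficient array. -/
def tpow {k : ℕ} {F : Type*} [Field F] {τ : Fin k → Type*} (c : (∀ i, τ i) → F) (n : ℕ) :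
    (∀ i, Fin n → τ i) → F :=
  fun u => ∏ m : Fin n, c (fun i => u i m)

/-- Support of a coefficient array, as a finite set of integer tuples. -/
def support {k : ℕ} {F : Type*} [Field F] (S : Fin k → Finset ℤ)
    (c : (∀ i, {x : ℤ // x ∈ S i}) → F) : Finset (Fin k → ℤ) :=
  (Finset.univ.filter (fun s : ∀ i, {x : ℤ // x ∈ S i} => c s ≠ 0)).image
    (fun s i => (s i : ℤ))

/-- Section `Γ_I^x`: restrictions to coordinates outside `I` of the γ ∈ Γ agreeing with x on I. -/
def sect {k : ℕ} (Γ : Finset (Fin k → ℤ)) (I : Finset (Fin k)) (x : Fin k → ℤ) :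
    Finset ({i : Fin k // i ∉ I} → ℤ) :=
  (Γ.filter (fun γ => ∀ i ∈ I, γ i = x i)).image (fun γ i => γ i.1)

/-- Section along a single coordinate. -/
def sect1 {k : ℕ} (Γ : Finset (Fin k → ℤ)) (i : Fin k) (a : ℤ) :
    Finset ({j : Fin k // j ≠ i} → ℤ) :=
  (Γ.filter (fun γ => γ i = a)).image (fun γ j => γ j.1)

/-- Trifferent set of strings. -/
def trifferent {n : ℕ} {α : Type*} (A : Finset (Fin n → α)) : Prop :=
  ∀ x ∈ A, ∀ y ∈ A, ∀ z ∈ A, x ≠ y → y ≠ z → x ≠ z →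
    ∃ i, x i ≠ y i ∧ y i ≠ z i ∧ x i ≠ z i

/-- The cube root of unity `ω = e^{2πi/3}`. -/
def w : ℂ := Complex.exp (2 * Real.pi * Complex.I / 3)

/-- The tensor `f_{x,y}(z,t)` used for the trifference problem. -/
def f {n : ℕ} (x y z t : Fin n → ℂ) : ℂ :=
  ∏ i, (x i + y i + z i) * (x i + y i + t i)

/-- Monomial functions `g_{α,β}`. -/
def g {n : ℕ} (α β : Fin n → ℕ) : (Fin n → ℂ) × (Fin n → ℂ) → ℂ :=
  fun q => ∏ i, (q.1 i + q.2 i) ^ α i * (q.1 i * q.2 i) ^ β i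


/-! Evaluate at the points `(x, y)` with `(x, y) ∈ P`. Three distinct cube roots of unity sum to
zero, so if `x ∉ {x', y'}` trifference gives a coordinate where `x' + y' + x` vanishes, and
likewise for `y`; as `P` contains only one orientation of each pair, `f_{x',y'}(x, y) = 0` unless
`(x', y') = (x, y)`. On the diagonal no factor vanishes, since `a + a + b ≠ 0` for cube roots of
unity `a, b`. The evaluation matrix is thus diagonal with nonzero diagonal. -/

theorem linearIndependent_of_apply_eq_zero_of_ne {ι Q R : Type*} [Ring R] [NoZeroDivisors R]
    {v : ι → Q → R} (e : ι → Q) (hdiag : ∀ i, v i (e i) ≠ 0)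
    (hoff : ∀ i j, i ≠ j → v j (e i) = 0) : LinearIndependent R v := by
  rw [linearIndependent_iff']
  intro s c hc i hi
  have hci := congrFun hc (e i)
  simp only [Finset.sum_apply, Pi.smul_apply, smul_eq_mul, Pi.zero_apply] at hci
  rw [Finset.sum_eq_single i (fun j _ hji => by rw [hoff i j hji.symm, mul_zero])
    (fun h => absurd hi h)] at hci
  exact (mul_eq_zero.mp hci).resolve_right (hdiag i)

section CubeRoots

variable {K : Type*} [CommRing K] [IsDomain K] {a b c : K}

theorem add_add_eq_zero_of_pow_three_eq_one (ha : a ^ 3 = 1) (hb : b ^ 3 = 1) (hc : c ^ 3 = 1)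
    (hab : a ≠ b) (hbc : b ≠ c) (hac : a ≠ c) : a + b + c = 0 := by
  have hab' : a ^ 2 + a * b + b ^ 2 = 0 :=
    (mul_eq_zero.mp (by linear_combination ha - hb : (a - b) * (a ^ 2 + a * b + b ^ 2) = 0)
      ).resolve_left (sub_ne_zero.mpr hab)
  have hac' : a ^ 2 + a * c + c ^ 2 = 0 :=
    (mul_eq_zero.mp (by linear_combination ha - hc : (a - c) * (a ^ 2 + a * c + c ^ 2) = 0)
      ).resolve_left (sub_ne_zero.mpr hac)
  exact (mul_eq_zero.mp (by linear_combination hab' - hac' : (b - c) * (a + b + c) = 0)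
    ).resolve_left (sub_ne_zero.mpr hbc)

theorem add_add_ne_zero_of_pow_three_eq_one (h3 : (3 : K) ≠ 0) (ha : a ^ 3 = 1)
    (hb : b ^ 3 = 1) : a + a + b ≠ 0 := by
  intro h
  -- `b = -2a` would give `1 = b ^ 3 = -8`.
  exact h3 (mul_self_eq_zero.mp
    (by linear_combination (b ^ 2 - 2 * a * b + 4 * a ^ 2) * h - hb - 8 * ha))

end CubeRoots

theorem w_pow_three : w ^ 3 = 1 := by
  simpa [w] using (Complex.isPrimitiveRoot_exp 3 three_ne_zero).pow_eq_one

theorem pow_three_eq_one_of_mem {a : ℂ} (ha : a ∈ ({1, w, w ^ 2} : Set ℂ)) : a ^ 3 = 1 := by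
  rcases ha with rfl | rfl | rfl
  · exact one_pow 3
  · exact w_pow_three
  · rw [← pow_mul, mul_comm, pow_mul, w_pow_three, one_pow]

section TrifferentTensor

variable {n : ℕ} {A : Finset (Fin n → ℂ)} {x y z t : Fin n → ℂ}

theorem f_eq_zero_of_trifferent_left (hA : ∀ x ∈ A, ∀ i, x i ^ 3 = 1) (htrif : trifferent A)
    (hx : x ∈ A) (hy : y ∈ A) (hz : z ∈ A) (hxy : x ≠ y) (hyz : y ≠ z) (hxz : x ≠ z) :
    f x y z t = 0 := by
  obtain ⟨i, hi⟩ := htrif x hx y hy z hz hxy hyz hxz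
  refine Finset.prod_eq_zero (Finset.mem_univ i) ?_
  rw [add_add_eq_zero_of_pow_three_eq_one (hA x hx i) (hA y hy i) (hA z hz i) hi.1 hi.2.1 hi.2.2,
    zero_mul]

theorem f_eq_zero_of_trifferent_right (hA : ∀ x ∈ A, ∀ i, x i ^ 3 = 1) (htrif : trifferent A)
    (hx : x ∈ A) (hy : y ∈ A) (ht : t ∈ A) (hxy : x ≠ y) (hyt : y ≠ t) (hxt : x ≠ t) :
    f x y z t = 0 := by
  obtain ⟨i, hi⟩ := htrif x hx y hy t ht hxy hyt hxt
  refine Finset.prod_eq_zero (Finset.mem_univ i) ?_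
  rw [add_add_eq_zero_of_pow_three_eq_one (hA x hx i) (hA y hy i) (hA t ht i) hi.1 hi.2.1 hi.2.2,
    mul_zero]

theorem f_self_ne_zero (hx : ∀ i, x i ^ 3 = 1) (hy : ∀ i, y i ^ 3 = 1) : f x y x y ≠ 0 :=
  Finset.prod_ne_zero_iff.mpr fun i _ => mul_ne_zero
    (by
      rw [add_right_comm]
      exact add_add_ne_zero_of_pow_three_eq_one three_ne_zero (hx i) (hy i))
    (by
      rw [add_assoc, add_comm]
      exact add_add_ne_zero_of_pow_three_eq_one three_ne_zero (hy i) (hx i))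

end TrifferentTensor

/-- the functions `f_{x,y}`, for one representative `(x,y)` of each
unordered pair of distinct elements of a trifferent set `A`, are linearly independent
as functions on `{(z,t) ∈ A × A : z ≠ t}`. -/
theorem stmt17 {n : ℕ} (A : Finset (Fin n → ℂ))
    (hA : ∀ x ∈ A, ∀ i, x i ∈ ({1, w, w ^ 2} : Set ℂ))
    (htrif : trifferent A)
    (P : Finset ((Fin n → ℂ) × (Fin n → ℂ)))
    (hP1 : ∀ p ∈ P, p.1 ∈ A ∧ p.2 ∈ A ∧ p.1 ≠ p.2)
    (hP2 : ∀ x ∈ A, ∀ y ∈ A, x ≠ y → ((x, y) ∈ P ↔ (y, x) ∉ P)) :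
    LinearIndependent ℂ (fun p : P =>
      (fun q : {q : (Fin n → ℂ) × (Fin n → ℂ) // q.1 ∈ A ∧ q.2 ∈ A ∧ q.1 ≠ q.2} =>
        f p.1.1 p.1.2 q.1.1 q.1.2)) := by
  have hcube : ∀ x ∈ A, ∀ i, x i ^ 3 = 1 := fun x hx i => pow_three_eq_one_of_mem (hA x hx i)
  refine linearIndependent_of_apply_eq_zero_of_ne (fun p => ⟨p.1, hP1 p.1 p.2⟩)
    (fun p => f_self_ne_zero (hcube _ (hP1 p.1 p.2).1) (hcube _ (hP1 p.1 p.2).2.1)) ?_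
  rintro ⟨⟨x, y⟩, hp⟩ ⟨⟨x', y'⟩, hp'⟩ hne
  obtain ⟨hx, hy, hxy⟩ := hP1 _ hp
  obtain ⟨hx', hy', hxy'⟩ := hP1 _ hp'
  by_cases hxl : x = x' ∨ x = y'
  swap
  · push Not at hxl
    exact f_eq_zero_of_trifferent_left hcube htrif hx' hy' hx hxy' (Ne.symm hxl.2) (Ne.symm hxl.1)
  by_cases hyr : y = x' ∨ y = y'
  swap
  · push Not at hyr
    exact f_eq_zero_of_trifferent_right hcube htrif hx' hy' hy hxy' (Ne.symm hyr.2) (Ne.symm hyr.1)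
  rcases hxl with rfl | rfl <;> rcases hyr with rfl | rfl
  · exact absurd rfl hxy
  · exact absurd rfl hne
  · exact absurd hp' ((hP2 _ hx _ hy hxy).mp hp)
  · exact absurd rfl hxy

end SlicePaper
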